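/- Define Γ₁ = 𝟙⊗𝟙 − √2 ∑_{i=1}^n ∂_i ⊗ T_i + √2 ∑_{i=1}^n x_i ⊗ T_{−i} on V = ℂ[x₁,…,xₙ]⊗ℂ^{2n+1}. Then for all 1 ≤ i, j ≤ n and multi-indices k, the intertwining identity X_{δ_j}(Γ₁(x^k ⊗ v_i)) = Γ₁((1/√2) x^{k+δ_j} ⊗ v_i − √2 x^{k+δ_i} ⊗ v_j) holds, where X_{δ_j}(x^k ⊗ v) = (1/√2)x^{k+δ_j} ⊗ v + (−1)^{|k|} x^k ⊗ T_j(v). -/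

import Mathlib

open Finsupp

noncomputable section

abbrev V (n : ℕ) : Type := ((Fin n →₀ ℕ) × Fin (2*n+1)) →₀ ℂ

def b {n : ℕ} (k : Fin n →₀ ℕ) (j : Fin (2*n+1)) : V n := Finsupp.single (k, j) 1

def mkOp {n : ℕ} (g : (Fin n →₀ ℕ) × Fin (2*n+1) → V n) : V n →ₗ[ℂ] V n :=
  Finsupp.lsum ℂ fun a => LinearMap.toSpanSingleton ℂ (V n) (g a)

def deg {n : ℕ} (k : Fin n →₀ ℕ) : ℕ := k.sum fun _ v => v

def sgn {n : ℕ} (k : Fin n →₀ ℕ) : ℂ := (-1) ^ deg k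

def rt2 : ℂ := Real.sqrt 2

def idx0 {n : ℕ} : Fin (2*n+1) := ⟨0, by omega⟩

def idxLo {n : ℕ} (i : Fin n) : Fin (2*n+1) := ⟨i.1+1, by have := i.isLt; omega⟩

def idxHi {n : ℕ} (i : Fin n) : Fin (2*n+1) := ⟨n+i.1+1, by have := i.isLt; omega⟩

/-- `T_i` applied to `x^k ⊗ v_j` (without the parity sign). -/
def TpApp {n : ℕ} (i : Fin n) (k : Fin n →₀ ℕ) (j : Fin (2*n+1)) : V n :=
  if j = idx0 then b k (idxLo i) else if j = idxHi i then b k idx0 else 0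

/-- `T_{-i}` applied to `x^k ⊗ v_j` (without the parity sign). -/
def TmApp {n : ℕ} (i : Fin n) (k : Fin n →₀ ℕ) (j : Fin (2*n+1)) : V n :=
  if j = idx0 then -(b k (idxHi i)) else if j = idxLo i then b k idx0 else 0

/-- The action of the odd root vector `X_{δ_j}` on `ℂ[x] ⊗ ℂ^{1|2n}`. -/
def Xplus {n : ℕ} (jj : Fin n) : V n →ₗ[ℂ] V n :=
  mkOp fun p => rt2⁻¹ • b (p.1 + Finsupp.single jj 1) p.2 + sgn p.1 • TpApp jj p.1 p.2

/-- The action of the odd root vector `X_{-δ_i}` on `ℂ[x] ⊗ ℂ^{1|2n}`. -/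
def Xminus {n : ℕ} (i : Fin n) : V n →ₗ[ℂ] V n :=
  mkOp fun p => (rt2⁻¹ * (p.1 i : ℂ)) • b (p.1 - Finsupp.single i 1) p.2
    + sgn p.1 • TmApp i p.1 p.2

/-- `Γ_{w₂} = 1⊗1 + √2 ∑ ∂_i ⊗ T_i - √2 ∑ x_i ⊗ T_{-i}`. -/
def Gamma2 {n : ℕ} : V n →ₗ[ℂ] V n :=
  mkOp fun p => b p.1 p.2
    + rt2 • ∑ i : Fin n, (sgn p.1 * (p.1 i : ℂ)) • TpApp i (p.1 - Finsupp.single i 1) p.2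
    - rt2 • ∑ i : Fin n, sgn p.1 • TmApp i (p.1 + Finsupp.single i 1) p.2

/-- `Γ_{w₁} = 1⊗1 - √2 ∑ ∂_i ⊗ T_i + √2 ∑ x_i ⊗ T_{-i}`. -/
def Gamma1 {n : ℕ} : V n →ₗ[ℂ] V n :=
  mkOp fun p => b p.1 p.2
    - rt2 • ∑ i : Fin n, (sgn p.1 * (p.1 i : ℂ)) • TpApp i (p.1 - Finsupp.single i 1) p.2
    + rt2 • ∑ i : Fin n, sgn p.1 • TmApp i (p.1 + Finsupp.single i 1) p.2

/-! On `x^k ⊗ vᵢ` every `∂ ⊗ T` term of `Γ₁` vanishes and only `x_i ⊗ T_{-i}` survives, so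
`Γ₁(x^k ⊗ vᵢ) = x^k ⊗ vᵢ + √2 (-1)^|k| x^{k+δᵢ} ⊗ v₀`. With this formula both sides of the identity
expand to `(1/√2) x^{k+δⱼ} ⊗ vᵢ + (-1)^|k| x^{k+δᵢ+δⱼ} ⊗ v₀ - √2 x^{k+δᵢ} ⊗ vⱼ`, the signs and
scalars matching because `x_i` is odd, `((-1)^|k|)² = 1` and `√2² = 2`. -/

lemma mkOp_b {n : ℕ} (g : (Fin n →₀ ℕ) × Fin (2*n+1) → V n) (k : Fin n →₀ ℕ)
    (j : Fin (2*n+1)) : mkOp g (b k j) = g (k, j) := by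
  simp [mkOp, b]

lemma deg_add_single {n : ℕ} (k : Fin n →₀ ℕ) (i : Fin n) :
    deg (k + Finsupp.single i 1) = deg k + 1 := by
  change degree (k + Finsupp.single i 1) = degree k + 1
  simp

lemma sgn_add_single {n : ℕ} (k : Fin n →₀ ℕ) (i : Fin n) :
    sgn (k + Finsupp.single i 1) = -sgn k := by
  rw [sgn, sgn, deg_add_single, pow_succ, mul_neg_one]

lemma sgn_sq {n : ℕ} (k : Fin n →₀ ℕ) : sgn k ^ 2 = 1 := by
  rw [sgn, ← pow_mul, mul_comm, pow_mul, neg_one_sq, one_pow]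

lemma rt2_sq : rt2 ^ 2 = 2 := by
  rw [rt2, ← Complex.ofReal_pow, Real.sq_sqrt zero_le_two, Complex.ofReal_ofNat]

lemma rt2_ne_zero : rt2 ≠ 0 := by
  intro h
  simpa [h] using rt2_sq

lemma idxLo_ne_idx0 {n : ℕ} (i : Fin n) : (idxLo i : Fin (2*n+1)) ≠ idx0 := by
  simp [idxLo, idx0, Fin.ext_iff]

lemma idxLo_ne_idxHi {n : ℕ} (i i' : Fin n) : (idxLo i : Fin (2*n+1)) ≠ idxHi i' := by
  simp only [idxLo, idxHi, ne_eq, Fin.ext_iff]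
  omega

lemma idxLo_inj {n : ℕ} {i i' : Fin n} : (idxLo i : Fin (2*n+1)) = idxLo i' ↔ i = i' := by
  simp [idxLo, Fin.ext_iff]

lemma TpApp_idx0 {n : ℕ} (i : Fin n) (k : Fin n →₀ ℕ) : TpApp i k idx0 = b k (idxLo i) := by
  simp [TpApp]

lemma TpApp_idxLo {n : ℕ} (i' i : Fin n) (k : Fin n →₀ ℕ) : TpApp i' k (idxLo i) = 0 := by
  simp [TpApp, idxLo_ne_idx0, idxLo_ne_idxHi]

lemma TmApp_idxLo {n : ℕ} (i' i : Fin n) (k : Fin n →₀ ℕ) :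
    TmApp i' k (idxLo i) = if i = i' then b k idx0 else 0 := by
  simp [TmApp, idxLo_ne_idx0, idxLo_inj]

lemma Xplus_b_idx0 {n : ℕ} (j : Fin n) (k : Fin n →₀ ℕ) :
    Xplus j (b k idx0) = rt2⁻¹ • b (k + Finsupp.single j 1) idx0 + sgn k • b k (idxLo j) := by
  rw [Xplus, mkOp_b, TpApp_idx0]

lemma Xplus_b_idxLo {n : ℕ} (j i : Fin n) (k : Fin n →₀ ℕ) :
    Xplus j (b k (idxLo i)) = rt2⁻¹ • b (k + Finsupp.single j 1) (idxLo i) := by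
  simp [Xplus, mkOp_b, TpApp_idxLo]

lemma Gamma1_b_idxLo {n : ℕ} (k : Fin n →₀ ℕ) (i : Fin n) :
    Gamma1 (b k (idxLo i)) = b k (idxLo i) + (rt2 * sgn k) • b (k + Finsupp.single i 1) idx0 := by
  have hT : ∑ i' : Fin n, (sgn k * (k i' : ℂ)) • TpApp i' (k - Finsupp.single i' 1) (idxLo i)
      = 0 := by simp [TpApp_idxLo]
  have hTm : ∑ i' : Fin n, sgn k • TmApp i' (k + Finsupp.single i' 1) (idxLo i)
      = sgn k • b (k + Finsupp.single i 1) idx0 := by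
    simp [TmApp_idxLo]
  rw [Gamma1, mkOp_b, hT, hTm, smul_smul, smul_zero, sub_zero]

lemma Xplus_Gamma1_b_idxLo {n : ℕ} (k : Fin n →₀ ℕ) (i j : Fin n) :
    Xplus j (Gamma1 (b k (idxLo i))) =
      rt2⁻¹ • b (k + Finsupp.single j 1) (idxLo i)
        + sgn k • b (k + Finsupp.single i 1 + Finsupp.single j 1) idx0
        - rt2 • b (k + Finsupp.single i 1) (idxLo j) := by
  rw [Gamma1_b_idxLo, map_add, map_smul, Xplus_b_idxLo, Xplus_b_idx0, sgn_add_single]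
  match_scalars
  · rfl
  · field_simp [rt2_ne_zero]
  · linear_combination (-rt2) * sgn_sq k

/-- Intertwining identity for `Γ₁` and `X_{δⱼ}` on `x^k ⊗ vᵢ`. -/
theorem stmt14 (n : ℕ) (k : Fin n →₀ ℕ) (i j : Fin n) :
    Xplus j (Gamma1 (b k (idxLo i))) =
      Gamma1 (rt2⁻¹ • b (k + Finsupp.single j 1) (idxLo i)
        - rt2 • b (k + Finsupp.single i 1) (idxLo j)) := by
  rw [Xplus_Gamma1_b_idxLo, map_sub, map_smul, map_smul, Gamma1_b_idxLo, Gamma1_b_idxLo,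
    sgn_add_single, sgn_add_single, add_right_comm k (Finsupp.single j 1)]
  match_scalars
  · rfl
  · linear_combination sgn k * inv_mul_cancel₀ rt2_ne_zero - sgn k * rt2_sq
  · rfl
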